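/- For the rule-B vector fields Z₁, Z₂, Z₃ on ℝ⁶, the Lie brackets are given explicitly by [Zᵢ, Zᵢ₊₁](m) = (xᵢ − x_{i+2})∂_{xᵢ} + (x_{i+2} − x_{i+1})∂_{x_{i+1}} + (yᵢ − y_{i+2})∂_{yᵢ} + (y_{i+2} − y_{i+1})∂_{y_{i+1}} for each i = 1, 2, 3 (indices modulo 3). -/
import Mathlib


def xc (i : Fin 3) : Fin 6 := ⟨2 * i.val, by have := i.isLt; omega⟩

def yc (i : Fin 3) : Fin 6 := ⟨2 * i.val + 1, by have := i.isLt; omega⟩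

noncomputable def lieBracket (V W : (Fin 6 → ℝ) → (Fin 6 → ℝ)) :
    (Fin 6 → ℝ) → (Fin 6 → ℝ) :=
  fun m => fderiv ℝ W m (V m) - fderiv ℝ V m (W m)

/-- Rule-B vector fields: `Zᵢ = (x_{i+1} − x_{i+2})∂_{xᵢ} + (y_{i+1} − y_{i+2})∂_{yᵢ}`. -/
def ZB (i : Fin 3) (m : Fin 6 → ℝ) : Fin 6 → ℝ := fun j =>
  if j = xc i then m (xc (i + 1)) - m (xc (i + 2))
  else if j = yc i then m (yc (i + 1)) - m (yc (i + 2))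
  else 0


noncomputable def pr (k : Fin 6) : (Fin 6 → ℝ) →L[ℝ] ℝ :=
  ContinuousLinearMap.proj k

noncomputable def LB (i : Fin 3) : (Fin 6 → ℝ) →L[ℝ] (Fin 6 → ℝ) :=
  ContinuousLinearMap.pi fun j =>
    if j = xc i then pr (xc (i+1)) - pr (xc (i+2))
    else if j = yc i then pr (yc (i+1)) - pr (yc (i+2))
    else 0

lemma ZB_eq (i : Fin 3) : ZB i = ⇑(LB i) := by
  funext m j
  simp only [ZB, LB, ContinuousLinearMap.pi_apply]
  split_ifs <;> simp [pr]

theorem ruleB_brackets (i : Fin 3) (m : Fin 6 → ℝ) :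
    lieBracket (ZB i) (ZB (i + 1)) m = fun j =>
      if j = xc i then m (xc i) - m (xc (i + 2))
      else if j = xc (i + 1) then m (xc (i + 2)) - m (xc (i + 1))
      else if j = yc i then m (yc i) - m (yc (i + 2))
      else if j = yc (i + 1) then m (yc (i + 2)) - m (yc (i + 1))
      else 0 := by
  have h1 : fderiv ℝ (ZB i) m = LB i := by rw [ZB_eq]; exact (LB i).fderiv
  have h2 : fderiv ℝ (ZB (i+1)) m = LB (i+1) := by rw [ZB_eq]; exact (LB (i+1)).fderiv
  funext j
  simp only [lieBracket, h1, h2, Pi.sub_apply]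
  fin_cases i <;> fin_cases j <;>
    simp [LB, ZB, pr, xc, yc]
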